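/- Let K be an algebraically closed field of characteristic 0. If V ⊆ (Kˣ)ⁿ is a Kummer generic irreducible variety and m ∈ (Kˣ)ⁿ, then the multiplicative translate m·V = {m·v : v ∈ V} (multiplication coordinatewise) is also Kummer generic. -/

import Mathlib

/-!
Translation by `m` is an automorphism of the torus for the Zariski topology, so it preserves
irreducibility. Since `K` is algebraically closed, `m = r ^ k` for some `r`, and then
`√[k]{m · V} = r · √[k]{V}`, which is irreducible because `√[k]{V}` is.
-/

namespace BadFields

variable (K : Type) [Field K]

/-- The divisible hull `⟨A⟩` of a subset `A ⊆ Kˣ`: all `x` with `x ^ k` in the subgroup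
generated by `A` for some `k ≥ 1`.  Note that `⟨∅⟩` is exactly the group of roots of unity. -/
def divHull (A : Set Kˣ) : Subgroup Kˣ where
  carrier := {x | ∃ k : ℕ, k ≠ 0 ∧ x ^ k ∈ Subgroup.closure A}
  one_mem' := ⟨1, one_ne_zero, by simpa using Subgroup.one_mem _⟩
  mul_mem' := by
    rintro x y ⟨k, hk, hx⟩ ⟨l, hl, hy⟩
    refine ⟨k * l, mul_ne_zero hk hl, ?_⟩
    rw [mul_pow]
    exact Subgroup.mul_mem _ (by rw [pow_mul]; exact Subgroup.pow_mem _ hx l)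
      (by rw [mul_comm k l, pow_mul]; exact Subgroup.pow_mem _ hy k)
  inv_mem' := by
    rintro x ⟨k, hk, hx⟩
    exact ⟨k, hk, by rw [inv_pow]; exact Subgroup.inv_mem _ hx⟩

/-- A subgroup `U` of `Kˣ` is divisible if every element has `k`-th roots in `U` for all
`k ≥ 1`. -/
def DivisibleSub (U : Subgroup Kˣ) : Prop :=
  ∀ u ∈ U, ∀ k : ℕ, k ≠ 0 → ∃ v ∈ U, v ^ k = u

/-- The lattice of multiplicative relations of the tuple `y` modulo the divisible hull of `A`.
Since `Kˣ/⟨A⟩` is torsion-free, this lattice is saturated, and the dimension of the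
`ℚ`-subspace of `Kˣ/Tor` spanned by (the images of) `y` over (the image of) `A` equals
`n` minus the rank of this lattice. -/
def relLattice (A : Set Kˣ) {n : ℕ} (y : Fin n → Kˣ) : Submodule ℤ (Fin n → ℤ) where
  carrier := {c | (∏ i, y i ^ c i) ∈ divHull K A}
  zero_mem' := by simpa using Subgroup.one_mem _
  add_mem' := by
    intro c d hc hd
    have h : (∏ i, y i ^ (c + d) i) = (∏ i, y i ^ c i) * ∏ i, y i ^ d i := by
      rw [← Finset.prod_mul_distrib]
      exact Finset.prod_congr rfl fun i _ => by rw [Pi.add_apply, zpow_add]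
    show (∏ i, y i ^ (c + d) i) ∈ divHull K A
    rw [h]
    exact Subgroup.mul_mem _ hc hd
  smul_mem' := by
    intro m c hc
    have h : (∏ i, y i ^ (m • c) i) = (∏ i, y i ^ c i) ^ m := by
      rw [← Finset.prod_zpow]
      exact Finset.prod_congr rfl fun i _ => by
        rw [Pi.smul_apply, smul_eq_mul, mul_comm, zpow_mul]
    show (∏ i, y i ^ (m • c) i) ∈ divHull K A
    rw [h]
    exact Subgroup.zpow_mem _ hc m

/-- `ldimRel K A y` is the linear dimension `ldim(y/A)`: the dimension of the `ℚ`-subspace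
spanned by the images of the coordinates of `y` in `Kˣ/Tor` over the subspace spanned by the
image of `A`. -/
noncomputable def ldimRel (A : Set Kˣ) {n : ℕ} (y : Fin n → Kˣ) : ℕ :=
  n - Module.finrank ℤ (relLattice K A y)

/-- The (absolute) linear dimension `ldim(y)`. -/
noncomputable def ldim {n : ℕ} (y : Fin n → Kˣ) : ℕ := ldimRel K ∅ y

/-- `trdegOver K F s` : the transcendence degree over the subfield `F` of the field generated
by `F` and the set `s`, i.e. the maximal cardinality of a finite subset of `s` which is
algebraically independent over `F`. -/
noncomputable def trdegOver (F : Subfield K) (s : Set K) : ℕ :=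
  sSup {d | ∃ t : Finset K, ↑t ⊆ s ∧ t.card = d ∧
    AlgebraicIndependent F (fun x : {y : K // y ∈ t} => (x : K))}

/-- Transcendence degree over the prime field; in characteristic zero this is
`trdeg(ℚ(s)/ℚ)`. -/
noncomputable def trdegQ (s : Set K) : ℕ := trdegOver K ⊥ s

section Var

variable {ι : Type} [Fintype ι]

/-- The subset of the torus `(Kˣ)^ι` cut out by a set of polynomials. -/
def zeroSet (S : Set (MvPolynomial ι K)) : Set (ι → Kˣ) :=
  {x | ∀ p ∈ S, MvPolynomial.eval (fun i => (x i : K)) p = 0}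

/-- Zariski closed subsets of the torus `(Kˣ)^ι` (closed subvarieties). -/
def IsZClosed (V : Set (ι → Kˣ)) : Prop := ∃ S, V = zeroSet K S

/-- Zariski closed subsets of `(Kˣ)^ι` defined by polynomials all of whose coefficients lie
in `E`; for `E = ↑(⊥ : Subfield K)` (the prime field, i.e. `ℚ` in characteristic `0`) this
means defined over `ℚ`. -/
def IsClosedOver (E : Set K) (V : Set (ι → Kˣ)) : Prop :=
  ∃ S : Set (MvPolynomial ι K),
    (∀ p ∈ S, ∀ m, MvPolynomial.coeff m p ∈ E) ∧ V = zeroSet K S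

/-- Irreducible (nonempty) Zariski closed subsets of the torus `(Kˣ)^ι`. -/
def IsIrredVar (V : Set (ι → Kˣ)) : Prop :=
  IsZClosed K V ∧ V.Nonempty ∧
    ∀ C₁ C₂ : Set (ι → Kˣ), IsZClosed K C₁ → IsZClosed K C₂ →
      V ⊆ C₁ ∪ C₂ → V ⊆ C₁ ∨ V ⊆ C₂

/-- The Zariski closure in `(Kˣ)^ι`. -/
def zcl (S : Set (ι → Kˣ)) : Set (ι → Kˣ) := ⋂₀ {C | IsZClosed K C ∧ S ⊆ C}

/-- The locus of a point `b` over the set of constants `E`: the smallest Zariski closed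
set containing `b` defined by polynomials with coefficients in `E`. -/
def locusOver (E : Set K) (b : ι → Kˣ) : Set (ι → Kˣ) :=
  ⋂₀ {C | IsClosedOver K E C ∧ b ∈ C}

/-- The dimension of a (not necessarily irreducible) Zariski closed subset of `(Kˣ)^ι`:
the supremum of the lengths of strict chains of irreducible closed subsets. -/
noncomputable def vdim (V : Set (ι → Kˣ)) : ℕ :=
  sSup {d | ∃ W : Fin (d + 1) → Set (ι → Kˣ),
    (∀ i, IsIrredVar K (W i) ∧ W i ⊆ V) ∧ StrictMono W}

/-- The monomial map `y ↦ y^M` attached to an integer matrix `M`. -/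
def mpow {k : ℕ} (M : Matrix (Fin k) ι ℤ) (y : ι → Kˣ) : Fin k → Kˣ :=
  fun j => ∏ i, y i ^ M j i

/-- Algebraic subgroups of the torus `(Kˣ)^ι`: subgroups defined by finitely many monomial
equations `y^M = 1`. -/
def IsAlgSubgroup (H : Set (ι → Kˣ)) : Prop :=
  ∃ (k : ℕ) (M : Matrix (Fin k) ι ℤ), H = {y | mpow K M y = 1}

/-- Subtori of `(Kˣ)^ι`: irreducible algebraic subgroups. -/
def IsSubtorus (T : Set (ι → Kˣ)) : Prop := IsAlgSubgroup K T ∧ IsIrredVar K T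

/-- The coset `c · T` (multiplication coordinatewise). -/
def coset (c : ι → Kˣ) (T : Set (ι → Kˣ)) : Set (ι → Kˣ) := (fun t => c * t) '' T

/-- A variety is free if it is not contained in a coset of a proper subtorus. -/
def IsFree (V : Set (ι → Kˣ)) : Prop :=
  ¬ ∃ T c, IsSubtorus K T ∧ T ≠ Set.univ ∧ V ⊆ coset K c T

/-- `T` is the minimal torus of `V`: the smallest subtorus such that `V` is contained in some
coset of it. -/
def IsMinTorus (V T : Set (ι → Kˣ)) : Prop :=
  IsSubtorus K T ∧ (∃ c, V ⊆ coset K c T) ∧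
    ∀ T', IsSubtorus K T' → (∃ c, V ⊆ coset K c T') → T ⊆ T'

/-- The codimension `cd(V) = dim(minimal torus of V) - dim V`. -/
noncomputable def cd (V : Set (ι → Kˣ)) : ℕ :=
  sInf {d | ∃ T c, IsSubtorus K T ∧ V ⊆ coset K c T ∧ d = vdim K T} - vdim K V

/-- `S` is cd-maximal in `W`. -/
def CdMaximal (S W : Set (ι → Kˣ)) : Prop :=
  IsIrredVar K S ∧ S ⊆ W ∧
    ∀ S', IsIrredVar K S' → S ⊂ S' → S' ⊆ W → cd K S < cd K S'

/-- `√[m]{V}`, the preimage of `V` under coordinatewise `m`-th powers. -/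
def mroot (m : ℕ) (V : Set (ι → Kˣ)) : Set (ι → Kˣ) := {a | (fun i => a i ^ m) ∈ V}

/-- An irreducible variety `V` is Kummer generic if `√[m]{V}` is irreducible for all `m ≥ 1`. -/
def KummerGeneric (V : Set (ι → Kˣ)) : Prop :=
  IsIrredVar K V ∧ ∀ m : ℕ, 1 ≤ m → IsIrredVar K (mroot K m V)

/-- Irreducible components of a set `S`: maximal irreducible closed subsets of `S`. -/
def IsIrredComponent (V' S : Set (ι → Kˣ)) : Prop :=
  IsIrredVar K V' ∧ V' ⊆ S ∧ ∀ W, IsIrredVar K W → V' ⊆ W → W ⊆ S → W = V'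

end Var

/-- A correspondence torus: an `n`-dimensional subtorus of `(Kˣ)ⁿ × (Kˣ)ⁿ` which projects
onto `(Kˣ)ⁿ` in both coordinates.  We identify `(Kˣ)ⁿ × (Kˣ)ⁿ` with `(Kˣ)^(Fin n ⊕ Fin n)`,
a pair `(x, y)` corresponding to `Sum.elim x y`. -/
def IsCorrTorus {n : ℕ} (T : Set ((Fin n ⊕ Fin n) → Kˣ)) : Prop :=
  IsSubtorus K T ∧ vdim K T = n ∧
    (∀ x : Fin n → Kˣ, ∃ y, Sum.elim x y ∈ T) ∧
    (∀ y : Fin n → Kˣ, ∃ x, Sum.elim x y ∈ T)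

/-- `T` induces a toric correspondence between `V` and `V'`: the Zariski closures of the two
projections of `(V × V') ∩ T` are `V` and `V'` respectively. -/
def ToricCorr {n : ℕ} (T : Set ((Fin n ⊕ Fin n) → Kˣ)) (V V' : Set (Fin n → Kˣ)) : Prop :=
  zcl K ((fun p => p ∘ Sum.inl) '' {p | p ∈ T ∧ (p ∘ Sum.inl) ∈ V ∧ (p ∘ Sum.inr) ∈ V'}) = V ∧
  zcl K ((fun p => p ∘ Sum.inr) '' {p | p ∈ T ∧ (p ∘ Sum.inl) ∈ V ∧ (p ∘ Sum.inr) ∈ V'}) = V'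

/-- The set of elements of `K` underlying a set of units. -/
def unitSet (A : Set Kˣ) : Set K := (fun u : Kˣ => (u : K)) '' A

/-- `trdeg(y/A)`, the transcendence degree of `ℚ(A ∪ y)` over `ℚ(A)`. -/
noncomputable def trdegRel (A : Set Kˣ) {n : ℕ} (y : Fin n → Kˣ) : ℕ :=
  trdegOver K (Subfield.closure (unitSet K A)) (Set.range fun i => (y i : K))

/-- The predimension `δ(y/A) = 2 trdeg(y/A) - ldim(y/A)`. -/
noncomputable def pdelta (A : Set Kˣ) {n : ℕ} (y : Fin n → Kˣ) : ℤ :=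
  2 * (trdegRel K A y : ℤ) - (ldimRel K A y : ℤ)

/-- The extension `⟨A ∪ b⟩/A` is minimal prealgebraic of length `n`. -/
def MinPrealg {n : ℕ} (A : Set Kˣ) (b : Fin n → Kˣ) : Prop :=
  2 ≤ n ∧ ldimRel K A b = n ∧ pdelta K A b = 0 ∧
    ∀ B' : Set Kˣ, B' = ↑(divHull K B') → A ⊂ B' → B' ⊂ ↑(divHull K (A ∪ Set.range b)) →
      pdelta K B' b < 0


open MvPolynomial in
theorem eval_bind₁_C_mul_X {R : Type*} [CommSemiring R] {σ : Type*}
    (c x : σ → R) (p : MvPolynomial σ R) :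
    eval x (bind₁ (fun i => C (c i) * X i) p) = eval (c * x) p := by
  rw [eval, eval₂Hom_bind₁, eval]
  congr 2 with i
  simp [mul_comm]

section Translate

variable {K} {ι : Type}

theorem IsZClosed.preimage_mul_left [Fintype ι] {V : Set (ι → Kˣ)} (hV : IsZClosed K V)
    (c : ι → Kˣ) : IsZClosed K ((c * ·) ⁻¹' V) := by
  obtain ⟨S, rfl⟩ := hV
  refine ⟨MvPolynomial.bind₁ (fun i => MvPolynomial.C (c i : K) * MvPolynomial.X i) '' S, ?_⟩
  ext x
  simp only [zeroSet, Set.mem_preimage, Set.mem_ofPred_eq, Set.forall_mem_image,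
    eval_bind₁_C_mul_X]
  rfl

theorem IsZClosed.image_mul_left [Fintype ι] {V : Set (ι → Kˣ)} (hV : IsZClosed K V)
    (c : ι → Kˣ) : IsZClosed K ((c * ·) '' V) := by
  rw [Set.image_mul_left]
  exact hV.preimage_mul_left c⁻¹

theorem IsIrredVar.image_mul_left [Fintype ι] {V : Set (ι → Kˣ)} (hV : IsIrredVar K V)
    (c : ι → Kˣ) : IsIrredVar K ((c * ·) '' V) := by
  obtain ⟨hclosed, hne, hirr⟩ := hV
  refine ⟨hclosed.image_mul_left c, hne.image _, fun C₁ C₂ h₁ h₂ hcover => ?_⟩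
  simp only [Set.image_subset_iff, Set.preimage_union] at hcover ⊢
  exact hirr _ _ (h₁.preimage_mul_left c) (h₂.preimage_mul_left c) hcover

theorem mroot_image_mul_left (k : ℕ) (V : Set (ι → Kˣ)) (r : ι → Kˣ) :
    mroot K k ((r ^ k * ·) '' V) = (r * ·) '' mroot K k V := by
  ext a
  simp only [Set.image_mul_left, Set.mem_preimage, mroot, Set.mem_ofPred_eq]
  convert Iff.rfl using 2
  ext i
  simp [mul_pow]

theorem exists_pow_eq_of_isAlgClosed [IsAlgClosed K] {k : ℕ} (hk : k ≠ 0) (c : ι → Kˣ) :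
    ∃ r : ι → Kˣ, r ^ k = c := by
  choose r hr using fun i => IsAlgClosed.exists_pow_nat_eq (c i : K) (Nat.pos_of_ne_zero hk)
  have hr0 (i : ι) : r i ≠ 0 := fun h => (c i).ne_zero (by rw [← hr i, h, zero_pow hk])
  exact ⟨fun i => Units.mk0 (r i) (hr0 i), funext fun i => Units.ext (hr i)⟩

end Translate

theorem kummerGeneric_translate_general
    (K : Type) [Field K] [IsAlgClosed K]
    {n : ℕ} (V : Set (Fin n → Kˣ)) (hV : KummerGeneric K V) (m : Fin n → Kˣ) :
    KummerGeneric K ((fun v => m * v) '' V) := by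
  obtain ⟨hirr, hroots⟩ := hV
  refine ⟨hirr.image_mul_left m, fun k hk => ?_⟩
  obtain ⟨r, rfl⟩ := exists_pow_eq_of_isAlgClosed (by omega : k ≠ 0) m
  rw [mroot_image_mul_left]
  exact (hroots k hk).image_mul_left r

/-- Kummer genericity is preserved under multiplicative translation. -/
theorem kummerGeneric_translate
    (K : Type) [Field K] [IsAlgClosed K] [CharZero K]
    {n : ℕ} (V : Set (Fin n → Kˣ)) (hV : KummerGeneric K V) (m : Fin n → Kˣ) :
    KummerGeneric K ((fun v => m * v) '' V) :=
  kummerGeneric_translate_general K V hV m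

end BadFields
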